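/- arXiv:math/9912242 — 6 statements merged into one kernel-verified Lean document; each statement's English description precedes it below -/
import Mathlib

section
/- For r ≥ 0, the average of log|r e^{iθ} − 1| over θ ∈ [0, 2π] equals 0 if r < 1 and equals log r if r ≥ 1; that is, (1/(2π)) ∫₀^{2π} log|r e^{iθ} − 1| dθ = max(log r, 0). -/
open Real

lemma average_log_norm_mul_exp_sub_one_eq_circleAverage (r : ℝ) :
    (1 / (2 * π)) * ∫ θ in (0:ℝ)..(2 * π),
      Real.log ‖(r : ℂ) * Complex.exp (θ * Complex.I) - 1‖ =
    circleAverage (fun z ↦ Real.log ‖z - 1‖) 0 r := by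
  simp [circleAverage_def, circleMap]

lemma log_add_posLog_inv (x : ℝ) : Real.log x + log⁺ x⁻¹ = max (Real.log x) 0 := by
  rw [max_comm, ← posLog_apply, ← posLog_sub_posLog_inv (x := x), sub_add_cancel]

theorem average_log_abs_circle_general (r : ℝ) :
    (1 / (2 * π)) * ∫ θ in (0:ℝ)..(2 * π),
      Real.log ‖(r : ℂ) * Complex.exp (θ * Complex.I) - 1‖ =
    max (Real.log r) 0 := by
  rw [average_log_norm_mul_exp_sub_one_eq_circleAverage]
  rcases eq_or_ne r 0 with rfl | hr
  · simp
  · rw [circleAverage_log_norm_sub_const_eq_log_radius_add_posLog hr, zero_sub, norm_neg,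
      norm_one, mul_one, log_add_posLog_inv]

theorem average_log_abs_circle (r : ℝ) (hr : 0 ≤ r) :
    (1 / (2 * π)) * ∫ θ in (0:ℝ)..(2 * π),
      Real.log ‖(r : ℂ) * Complex.exp (θ * Complex.I) - 1‖ =
    max (Real.log r) 0 :=
  average_log_abs_circle_general r
end

section
/- Let μ be a probability measure on ℝ with compact support, λ ∈ ℂ, and ζ ∈ ℂ such that ζ − |λ − x|² ≠ 0 for all x in the support of μ and (Im λ)² − ζ ∉ [0,∞) (so x₊ ≠ x₋). Define x₊ = Re λ + i√((Im λ)² − ζ) and x₋ = Re λ − i√((Im λ)² − ζ) (for a fixed branch of the square root). Then ∫ 1/(ζ − |λ − x|²) dμ(x) = (G(x₊) − G(x₋))/(x₊ − x₋), where G is the Cauchy transform of μ. -/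
/-!
For real `x`, `|λ - x|² - ζ = (x - Re λ)² + s²` with `s² = (Im λ)² - ζ`, which factors as
`(x₊ - x)(x₋ - x)`. Partial fractions then split `(ζ - |λ - x|²)⁻¹` on the support of `μ` into
`((x₊ - x)⁻¹ - (x₋ - x)⁻¹) / (x₊ - x₋)`, and integrating term by term gives the claim; all three
integrands are continuous on the compact support, hence integrable.
-/

open MeasureTheory

theorem neg_inv_mul_sub_sub {F : Type*} [Field F] {a b x : F} (hab : a ≠ b)
    (ha : a - x ≠ 0) (hb : b - x ≠ 0) :
    -((a - x) * (b - x))⁻¹ = ((a - x)⁻¹ - (b - x)⁻¹) / (a - b) := by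
  rw [inv_sub_inv ha hb, sub_sub_sub_cancel_right, div_div, ← neg_sub a b, neg_div,
    div_mul_cancel_right₀ (sub_ne_zero.2 hab)]

theorem Complex.norm_sub_ofReal_sq_sub_eq_mul (lam ζ s : ℂ) (hs : s ^ 2 = (lam.im : ℂ) ^ 2 - ζ)
    (x : ℝ) :
    (‖lam - x‖ : ℂ) ^ 2 - ζ = (lam.re + I * s - x) * (lam.re - I * s - x) := by
  have hnorm : (‖lam - x‖ : ℂ) ^ 2 = (lam.re - x) ^ 2 + (lam.im : ℂ) ^ 2 := by
    norm_cast
    rw [Complex.sq_norm, Complex.normSq_apply]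
    simp only [sub_re, ofReal_re, sub_im, ofReal_im, sub_zero]
    ring
  rw [hnorm]
  linear_combination -hs + s ^ 2 * I_sq

theorem integrable_of_continuousOn_of_ae_mem {X E : Type*} [TopologicalSpace X] [T2Space X]
    [MeasurableSpace X] [OpensMeasurableSpace X] [NormedAddCommGroup E] {μ : Measure X}
    [IsFiniteMeasureOnCompacts μ] {K : Set X} (hK : IsCompact K) (hμK : ∀ᵐ x ∂μ, x ∈ K)
    {f : X → E} (hf : ContinuousOn f K) : Integrable f μ := by
  rw [← Measure.restrict_eq_self_of_ae_mem hμK]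
  exact hf.integrableOn_compact hK

theorem cauchy_transform_of_abs_sq (μ : Measure ℝ) [IsProbabilityMeasure μ]
    (K : Set ℝ) (hK : IsCompact K) (hμK : μ Kᶜ = 0)
    (lam ζ s : ℂ) (hs : s ^ 2 = ((lam.im : ℂ)) ^ 2 - ζ) (hs0 : s ≠ 0)
    (hden : ∀ x ∈ K, ζ - ((‖lam - (x : ℂ)‖)^2 : ℂ) ≠ 0)
    (G : ℂ → ℂ) (hG : ∀ w : ℂ, G w = ∫ x, (w - (x : ℂ))⁻¹ ∂μ)
    (xp xm : ℂ) (hxp : xp = (lam.re : ℂ) + Complex.I * s)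
    (hxm : xm = (lam.re : ℂ) - Complex.I * s) :
    (∫ x, (ζ - ((‖lam - (x : ℂ)‖)^2 : ℂ))⁻¹ ∂μ)
      = (G xp - G xm) / (xp - xm) := by
  have hae : ∀ᵐ x ∂μ, x ∈ K := ae_iff.2 hμK
  have hfactor : ∀ x : ℝ, ζ - (‖lam - x‖ : ℂ) ^ 2 = -((xp - x) * (xm - x)) := fun x => by
    rw [hxp, hxm, ← Complex.norm_sub_ofReal_sq_sub_eq_mul lam ζ s hs x, neg_sub]
  have hroots : ∀ x ∈ K, xp - x ≠ 0 ∧ xm - x ≠ 0 := fun x hx =>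
    mul_ne_zero_iff.1 (neg_ne_zero.1 (hfactor x ▸ hden x hx))
  have hpm : xp ≠ xm := by
    have hdiff : xp - xm = 2 * Complex.I * s := by rw [hxp, hxm]; ring
    exact sub_ne_zero.1 (hdiff ▸ mul_ne_zero (mul_ne_zero two_ne_zero Complex.I_ne_zero) hs0)
  have hint : ∀ w : ℂ, (∀ x ∈ K, w - (x : ℂ) ≠ 0) → Integrable (fun x : ℝ => (w - x)⁻¹) μ :=
    fun w hw => integrable_of_continuousOn_of_ae_mem hK hae <|
      (continuous_const.sub Complex.continuous_ofReal).continuousOn.inv₀ hw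
  calc (∫ x, (ζ - (‖lam - x‖ : ℂ) ^ 2)⁻¹ ∂μ)
      = ∫ x, ((xp - x)⁻¹ - (xm - x)⁻¹) / (xp - xm) ∂μ := by
        refine integral_congr_ae ?_
        filter_upwards [hae] with x hx
        rw [hfactor, inv_neg, neg_inv_mul_sub_sub hpm (hroots x hx).1 (hroots x hx).2]
    _ = (G xp - G xm) / (xp - xm) := by
        rw [integral_div, integral_sub (hint xp fun x hx => (hroots x hx).1)
          (hint xm fun x hx => (hroots x hx).2), hG, hG]
end

section
/- Let α > β > 0, γ = α − β, and λ = 1/ξ + γξ with 0 < |ξ| < 1/√γ and λ ∉ ℝ. With ω = 1/ξ − γξ, the inequality (ω − ω̄)/(λ − λ̄) ≥ α/β holds if and only if |ξ|² ≥ 1/(α + β). -/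
/-!
Both `ω - ω̄` and `λ - λ̄` are `2i` times an imaginary part, and since `ξ⁻¹ = ξ̄ / |ξ|²` these are
`Im ξ · (γ - |ξ|⁻²)` and `-Im ξ · (|ξ|⁻² + γ)`. Hence the quotient is the real number
`(1 + γ|ξ|²) / (1 - γ|ξ|²)`, whose denominator is positive because `|ξ|² < 1/γ`; clearing it turns
`α / β ≤ (1 + γ|ξ|²) / (1 - γ|ξ|²)` into `γ ≤ γ (α + β) |ξ|²`.
-/

open scoped ComplexOrder

open Complex ComplexConjugate

theorem Complex.sub_conj_div_sub_conj (w z : ℂ) :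
    (w - conj w) / (z - conj z) = ((w.im / z.im : ℝ) : ℂ) := by
  rw [sub_conj, sub_conj, mul_div_mul_right _ _ I_ne_zero]
  push_cast
  exact mul_div_mul_left _ _ two_ne_zero

theorem Complex.im_inv_sub_div_im_inv_add {ξ : ℂ} (hξ : ξ.im ≠ 0) (c : ℝ) :
    (ξ⁻¹ - c * ξ).im / (ξ⁻¹ + c * ξ).im = (1 + c * normSq ξ) / (1 - c * normSq ξ) := by
  have hn : normSq ξ ≠ 0 := (normSq_pos.2 fun h ↦ hξ (by simp [h])).ne'
  have im_sub : (ξ⁻¹ - c * ξ).im = -ξ.im / normSq ξ * (1 + c * normSq ξ) := by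
    simp only [sub_im, inv_im, im_ofReal_mul]
    field_simp
    ring
  have im_add : (ξ⁻¹ + c * ξ).im = -ξ.im / normSq ξ * (1 - c * normSq ξ) := by
    simp only [add_im, inv_im, im_ofReal_mul]
    field_simp
    ring
  rw [im_sub, im_add, mul_div_mul_left _ _ (div_ne_zero (neg_ne_zero.2 hξ) hn)]

theorem Real.mul_sq_lt_one_of_lt_one_div_sqrt {γ r : ℝ} (hr : 0 ≤ r) (h : r < 1 / √γ) :
    γ * r ^ 2 < 1 := by
  have hγ : 0 < γ := Real.sqrt_pos.1 (one_div_pos.1 (hr.trans_lt h))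
  have := pow_lt_pow_left₀ h hr two_ne_zero
  rw [div_pow, one_pow, Real.sq_sqrt hγ.le] at this
  exact (lt_div_iff₀' hγ).1 this

theorem div_le_one_add_div_one_sub_iff {α β n : ℝ} (hβ : 0 < β) (hαβ : β < α)
    (hn : (α - β) * n < 1) :
    α / β ≤ (1 + (α - β) * n) / (1 - (α - β) * n) ↔ 1 / (α + β) ≤ n := by
  rw [div_le_div_iff₀ hβ (sub_pos.2 hn), div_le_iff₀ (by linarith)]
  constructor <;> intro h <;> nlinarith

theorem elliptic_spectrum_reduction_general (α β γ : ℝ) (hβ : 0 < β) (hαβ : β < α)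
    (hγ : γ = α - β) (ξ lam ω : ℂ)
    (hξ1 : ‖ξ‖ < 1 / Real.sqrt γ)
    (hlam : lam = ξ⁻¹ + (γ : ℂ) * ξ) (him : lam.im ≠ 0)
    (hω : ω = ξ⁻¹ - (γ : ℂ) * ξ) :
    ((α / β : ℝ) : ℂ) ≤ (ω - starRingEnd ℂ ω) / (lam - starRingEnd ℂ lam)
      ↔ 1 / (α + β) ≤ ‖ξ‖ ^ 2 := by
  subst hγ hlam hω
  have hξ : ξ.im ≠ 0 := fun h ↦ him (by simp [inv_im, h])
  have hγξ : (α - β) * normSq ξ < 1 :=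
    Complex.sq_norm ξ ▸ Real.mul_sq_lt_one_of_lt_one_div_sqrt (norm_nonneg ξ) hξ1
  rw [sub_conj_div_sub_conj, im_inv_sub_div_im_inv_add hξ, real_le_real, Complex.sq_norm]
  exact div_le_one_add_div_one_sub_iff hβ hαβ hγξ

theorem elliptic_spectrum_reduction (α β γ : ℝ) (hβ : 0 < β) (hαβ : β < α)
    (hγ : γ = α - β) (ξ lam ω : ℂ)
    (hξ0 : 0 < ‖ξ‖) (hξ1 : ‖ξ‖ < 1 / Real.sqrt γ)
    (hlam : lam = ξ⁻¹ + (γ : ℂ) * ξ) (him : lam.im ≠ 0)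
    (hω : ω = ξ⁻¹ - (γ : ℂ) * ξ) :
    ((α / β : ℝ) : ℂ) ≤ (ω - starRingEnd ℂ ω) / (lam - starRingEnd ℂ lam)
      ↔ 1 / (α + β) ≤ ‖ξ‖ ^ 2 :=
  elliptic_spectrum_reduction_general α β γ hβ hαβ hγ ξ lam ω hξ1 hlam him hω
end

section
/- Let μ be the Bernoulli measure (δ_{μ₊} + δ_{μ₋})/2 on ℝ with μ₊, μ₋ > 0, μ₊ ≠ μ₋, and let ψ(z) = (1/2)(1/(1 − μ₊ z) + 1/(1 − μ₋ z)) − 1 be its moment generating series. For r > 0 with r² ∉ {μ₊, μ₋}, the number t = (2μ₊μ₋ − r²(μ₊ + μ₋))/(2(r² − μ₊)(r² − μ₋)) satisfies ψ((t−1)/(t r²)) = t − 1, provided t ≠ 0. -/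
/-!
Write `s = r²` and `z = (t - 1) / (t s)`. Then `1 / (1 - μ z) = t s / (t (s - μ) + μ)`, and for the
given `t` the denominator `t (s - μ₊) + μ₊` collapses to `s (μ₊ - μ₋) / (2 (s - μ₋))`. Hence
`1 / (1 - μ₊ z) = 2 t (s - μ₋) / (μ₊ - μ₋)`, symmetrically for `μ₋`, and the average of the two
resolvents is `t (s - μ₋ - (s - μ₊)) / (μ₊ - μ₋) = t`.
-/

variable {K : Type*} [Field K]

/-- The nontrivial solution `t` of `ψ((t - 1) / (t s)) = t - 1` for the measure `(δ_p + δ_m) / 2`. -/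
def bernoulliRoot (p m s : K) : K := (2 * p * m - s * (p + m)) / (2 * (s - p) * (s - m))

theorem bernoulliRoot_comm (p m s : K) : bernoulliRoot p m s = bernoulliRoot m p s := by
  unfold bernoulliRoot
  ring

theorem one_div_one_sub_mul_div_mul {μ t s : K} (ht : t ≠ 0) (hs : s ≠ 0) :
    1 / (1 - μ * ((t - 1) / (t * s))) = t * s / (t * (s - μ) + μ) := by
  rw [mul_div_assoc', one_sub_div (mul_ne_zero ht hs), one_div_div]
  ring_nf

theorem bernoulliRoot_mul_sub_add [NeZero (2 : K)] {p m s : K} (hp : s ≠ p) (hm : s ≠ m) :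
    bernoulliRoot p m s * (s - p) + p = s * (p - m) / (2 * (s - m)) := by
  have := sub_ne_zero.mpr hp
  have := sub_ne_zero.mpr hm
  unfold bernoulliRoot
  field_simp
  ring

theorem one_div_one_sub_mul_bernoulliRoot [NeZero (2 : K)] {p m s : K} (hpm : p ≠ m)
    (hs : s ≠ 0) (hp : s ≠ p) (hm : s ≠ m) (ht : bernoulliRoot p m s ≠ 0) :
    1 / (1 - p * ((bernoulliRoot p m s - 1) / (bernoulliRoot p m s * s))) =
      2 * bernoulliRoot p m s * (s - m) / (p - m) := by
  have := sub_ne_zero.mpr hpm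
  have := sub_ne_zero.mpr hm
  rw [one_div_one_sub_mul_div_mul ht hs, bernoulliRoot_mul_sub_add hp hm]
  field_simp

theorem radial_distribution_bernoulli_general (μp μm : ℝ)
    (hne : μp ≠ μm)
    (ψ : ℝ → ℝ) (hψ : ∀ z, ψ z = (1/2) * (1/(1 - μp*z) + 1/(1 - μm*z)) - 1)
    (r : ℝ) (hr : 0 < r) (h1 : r^2 ≠ μp) (h2 : r^2 ≠ μm)
    (t : ℝ) (ht : t = (2*μp*μm - r^2*(μp + μm)) / (2*(r^2 - μp)*(r^2 - μm)))
    (ht0 : t ≠ 0) :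
    ψ ((t - 1)/(t * r^2)) = t - 1 := by
  have hs : r ^ 2 ≠ 0 := by positivity
  have htp : t = bernoulliRoot μp μm (r ^ 2) := ht
  have htm : t = bernoulliRoot μm μp (r ^ 2) := htp.trans (bernoulliRoot_comm _ _ _)
  have hp := one_div_one_sub_mul_bernoulliRoot hne hs h1 h2 (htp ▸ ht0)
  have hm := one_div_one_sub_mul_bernoulliRoot hne.symm hs h2 h1 (htm ▸ ht0)
  rw [← htp] at hp
  rw [← htm] at hm
  have := sub_ne_zero.mpr hne
  rw [hψ, hp, hm]
  field_simp
  ring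

theorem radial_distribution_bernoulli (μp μm : ℝ) (hp : 0 < μp) (hm : 0 < μm)
    (hne : μp ≠ μm)
    (ψ : ℝ → ℝ) (hψ : ∀ z, ψ z = (1/2) * (1/(1 - μp*z) + 1/(1 - μm*z)) - 1)
    (r : ℝ) (hr : 0 < r) (h1 : r^2 ≠ μp) (h2 : r^2 ≠ μm)
    (t : ℝ) (ht : t = (2*μp*μm - r^2*(μp + μm)) / (2*(r^2 - μp)*(r^2 - μm)))
    (ht0 : t ≠ 0) :
    ψ ((t - 1)/(t * r^2)) = t - 1 :=
  radial_distribution_bernoulli_general μp μm hne ψ hψ r hr h1 h2 t ht ht0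
end

section
/- For a ∈ ℂ with |a|² + 1 ≠ 0 on the relevant domain, the function p(λ) = −|β−α|²/(π(|λ−α|² − |λ−β|²)²) + (1/(2π))(1/(1−|λ−α|²)² + 1/(1−|λ−β|²)²), with α = 1, β = −1, is obtained as (1/(2π))∇² of L(λ) = (1/2) log|(|λ−1|² − |λ+1|²)/2| − (1/4)(log|1−|λ−1|²| + log|1−|λ+1|²|); i.e., ∇²L(λ) = 2π p(λ) at every point λ where |λ−1|² ≠ |λ+1|², |λ−1|² ≠ 1, and |λ+1|² ≠ 1. -/
/-!
Since `|λ - 1|² - |λ + 1|² = -4x` depends on `x` alone, the first logarithm only contributes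
`∂ₓ² (½ log |2x|) = -1 / (2x²)`. Each of the other two is radial about its centre `c`:
with `q = 1 - |λ - c|²` one has `∂ₓ² log |q| + ∂ᵧ² log |q| = -4 / q - 4 |λ - c|² / q² = -4 / q²`,
because `q + |λ - c|² = 1`.
-/

open Filter Topology Real

section SecondDeriv

variable {𝕜 : Type*} [NontriviallyNormedField 𝕜] {F : Type*} [NormedAddCommGroup F]
  [NormedSpace 𝕜 F]

def HasSecondDerivAt (f : 𝕜 → F) (f'' : F) (x : 𝕜) : Prop :=
  ∃ f' : 𝕜 → F, (∀ᶠ s in 𝓝 x, HasDerivAt f (f' s) s) ∧ HasDerivAt f' f'' x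

theorem HasSecondDerivAt.deriv_deriv {f : 𝕜 → F} {f'' : F} {x : 𝕜}
    (hf : HasSecondDerivAt f f'' x) : deriv (deriv f) x = f'' := by
  obtain ⟨f', hf', hf''⟩ := hf
  have hderiv : deriv f =ᶠ[𝓝 x] f' := hf'.mono fun s hs => hs.deriv
  rw [hderiv.deriv_eq]
  exact hf''.deriv

theorem hasSecondDerivAt_const (c : F) (x : 𝕜) : HasSecondDerivAt (fun _ => c) 0 x :=
  ⟨fun _ => 0, .of_forall fun s => hasDerivAt_const s c, hasDerivAt_const x 0⟩

theorem HasSecondDerivAt.add {f g : 𝕜 → F} {f'' g'' : F} {x : 𝕜}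
    (hf : HasSecondDerivAt f f'' x) (hg : HasSecondDerivAt g g'' x) :
    HasSecondDerivAt (fun s => f s + g s) (f'' + g'') x := by
  obtain ⟨f', hf', hf''⟩ := hf
  obtain ⟨g', hg', hg''⟩ := hg
  exact ⟨fun s => f' s + g' s, (hf'.and hg').mono fun s h => h.1.add h.2, hf''.add hg''⟩

theorem HasSecondDerivAt.sub {f g : 𝕜 → F} {f'' g'' : F} {x : 𝕜}
    (hf : HasSecondDerivAt f f'' x) (hg : HasSecondDerivAt g g'' x) :
    HasSecondDerivAt (fun s => f s - g s) (f'' - g'') x := by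
  obtain ⟨f', hf', hf''⟩ := hf
  obtain ⟨g', hg', hg''⟩ := hg
  exact ⟨fun s => f' s - g' s, (hf'.and hg').mono fun s h => h.1.sub h.2, hf''.sub hg''⟩

theorem HasSecondDerivAt.const_smul {f : 𝕜 → F} {f'' : F} {x : 𝕜}
    (hf : HasSecondDerivAt f f'' x) (c : 𝕜) :
    HasSecondDerivAt (fun s => c • f s) (c • f'') x := by
  obtain ⟨f', hf', hf''⟩ := hf
  exact ⟨fun s => c • f' s, hf'.mono fun s h => h.const_smul c, hf''.const_smul c⟩

end SecondDeriv

theorem hasSecondDerivAt_log_abs_mul {k t : ℝ} (hk : k ≠ 0) (ht : t ≠ 0) :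
    HasSecondDerivAt (fun s => log |k * s|) (-1 / t ^ 2) t := by
  refine ⟨fun s => s⁻¹, ?_, by simpa [neg_div] using hasDerivAt_inv ht⟩
  filter_upwards [continuousAt_id.eventually_ne ht] with s hs
  simp only [log_abs]
  exact (((hasDerivAt_id' s).const_mul k).log (mul_ne_zero hk hs)).congr_deriv (by field_simp)

theorem hasSecondDerivAt_log_abs_sub_sq {r a t : ℝ} (ht : r - (t - a) ^ 2 ≠ 0) :
    HasSecondDerivAt (fun s => log |r - (s - a) ^ 2|)
      (-2 / (r - (t - a) ^ 2) - 4 * (t - a) ^ 2 / (r - (t - a) ^ 2) ^ 2) t := by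
  have hq : ∀ s, HasDerivAt (fun s => r - (s - a) ^ 2) (-(2 * (s - a))) s := fun s => by
    simpa using ((hasDerivAt_id s).sub_const a).pow 2 |>.const_sub r
  refine ⟨fun s => -2 * (s - a) / (r - (s - a) ^ 2), ?_, ?_⟩
  · filter_upwards [(continuous_const.sub ((continuous_id.sub continuous_const).pow 2)).continuousAt
      |>.eventually_ne ht] with s hs
    simpa only [log_abs, neg_mul] using (hq s).log hs
  · exact ((((hasDerivAt_id' t).sub_const a).const_mul (-2)).div (hq t) ht).congr_deriv
      (by field_simp; ring)

def HasLaplacianAt {F : Type*} [NormedAddCommGroup F] [NormedSpace ℝ F]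
    (u : ℝ → ℝ → F) (v : F) (x y : ℝ) : Prop :=
  ∃ a b, HasSecondDerivAt (fun s => u s y) a x ∧ HasSecondDerivAt (fun t => u x t) b y ∧ a + b = v

namespace HasLaplacianAt

variable {F : Type*} [NormedAddCommGroup F] [NormedSpace ℝ F] {u w : ℝ → ℝ → F} {v v' : F}
  {x y : ℝ}

theorem deriv_deriv_add_deriv_deriv (hu : HasLaplacianAt u v x y) :
    deriv (deriv fun s => u s y) x + deriv (deriv fun t => u x t) y = v := by
  obtain ⟨a, b, ha, hb, rfl⟩ := hu
  rw [ha.deriv_deriv, hb.deriv_deriv]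

theorem add (hu : HasLaplacianAt u v x y) (hw : HasLaplacianAt w v' x y) :
    HasLaplacianAt (fun s t => u s t + w s t) (v + v') x y := by
  obtain ⟨a, b, ha, hb, rfl⟩ := hu
  obtain ⟨a', b', ha', hb', rfl⟩ := hw
  exact ⟨a + a', b + b', ha.add ha', hb.add hb', by abel⟩

theorem sub (hu : HasLaplacianAt u v x y) (hw : HasLaplacianAt w v' x y) :
    HasLaplacianAt (fun s t => u s t - w s t) (v - v') x y := by
  obtain ⟨a, b, ha, hb, rfl⟩ := hu
  obtain ⟨a', b', ha', hb', rfl⟩ := hw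
  exact ⟨a - a', b - b', ha.sub ha', hb.sub hb', by abel⟩

theorem const_smul (hu : HasLaplacianAt u v x y) (c : ℝ) :
    HasLaplacianAt (fun s t => c • u s t) (c • v) x y := by
  obtain ⟨a, b, ha, hb, rfl⟩ := hu
  exact ⟨c • a, c • b, ha.const_smul c, hb.const_smul c, (smul_add c a b).symm⟩

end HasLaplacianAt

theorem hasLaplacianAt_log_abs_mul_fst {k x : ℝ} (hk : k ≠ 0) (hx : x ≠ 0) (y : ℝ) :
    HasLaplacianAt (fun s _ => log |k * s|) (-1 / x ^ 2) x y :=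
  ⟨_, 0, hasSecondDerivAt_log_abs_mul hk hx, hasSecondDerivAt_const _ y, add_zero _⟩

theorem hasLaplacianAt_log_abs_one_sub_dist_sq {c x y : ℝ} (h : 1 - ((x - c) ^ 2 + y ^ 2) ≠ 0) :
    HasLaplacianAt (fun s t => log |1 - ((s - c) ^ 2 + t ^ 2)|)
      (-4 / (1 - ((x - c) ^ 2 + y ^ 2)) ^ 2) x y := by
  have hfst : ∀ s t, 1 - ((s - c) ^ 2 + t ^ 2) = (1 - t ^ 2) - (s - c) ^ 2 := fun _ _ => by ring
  have hsnd : ∀ s t, 1 - ((s - c) ^ 2 + t ^ 2) = (1 - (s - c) ^ 2) - (t - 0) ^ 2 :=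
    fun _ _ => by ring
  refine ⟨-2 / (1 - y ^ 2 - (x - c) ^ 2) - 4 * (x - c) ^ 2 / (1 - y ^ 2 - (x - c) ^ 2) ^ 2,
    -2 / (1 - (x - c) ^ 2 - (y - 0) ^ 2) - 4 * (y - 0) ^ 2 / (1 - (x - c) ^ 2 - (y - 0) ^ 2) ^ 2,
    ?_, ?_, ?_⟩
  · simp only [hfst]
    exact hasSecondDerivAt_log_abs_sub_sq (by rwa [← hfst])
  · simp only [hsnd]
    exact hasSecondDerivAt_log_abs_sub_sq (by rwa [← hsnd])
  · rw [← hfst, ← hsnd]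
    field_simp
    ring

theorem laplacian_logDelta_symmetry_plus_haar (x y : ℝ) (A B : ℝ → ℝ → ℝ)
    (hA : ∀ x y, A x y = (x - 1)^2 + y^2) (hB : ∀ x y, B x y = (x + 1)^2 + y^2)
    (L : ℝ → ℝ → ℝ)
    (hL : ∀ x y, L x y = (1/2) * Real.log |(A x y - B x y)/2|
        - (1/4) * (Real.log |1 - A x y| + Real.log |1 - B x y|))
    (h1 : A x y ≠ B x y) (h2 : A x y ≠ 1) (h3 : B x y ≠ 1) :
    deriv (fun x' => deriv (fun x'' => L x'' y) x') x
      + deriv (fun y' => deriv (fun y'' => L x y'') y') y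
      = 2 * Real.pi * (-4 / (Real.pi * (A x y - B x y)^2)
          + (1/(2*Real.pi)) * (1/(1 - A x y)^2 + 1/(1 - B x y)^2)) := by
  have hAB : ∀ x y, (A x y - B x y) / 2 = -2 * x := fun x y => by rw [hA, hB]; ring
  have hx : x ≠ 0 := fun h => h1 (by linarith [hAB x y])
  have hLap : HasLaplacianAt L
      ((1 / 2) * (-1 / x ^ 2) - (1 / 4) * (-4 / (1 - A x y) ^ 2 + -4 / (1 - B x y) ^ 2)) x y := by
    have hL' : L = fun s t => (1 / 2) * log |-2 * s|
        - (1 / 4) * (log |1 - ((s - 1) ^ 2 + t ^ 2)| + log |1 - ((s - -1) ^ 2 + t ^ 2)|) := by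
      funext s t
      rw [hL, hAB, hA, hB, sub_neg_eq_add]
    rw [hL', hA, hB, ← sub_neg_eq_add x 1]
    exact ((hasLaplacianAt_log_abs_mul_fst (by norm_num) hx y).const_smul _).sub
      (((hasLaplacianAt_log_abs_one_sub_dist_sq (sub_ne_zero.2 (hA x y ▸ h2).symm)).add
        (hasLaplacianAt_log_abs_one_sub_dist_sq
          (by rw [sub_neg_eq_add]; exact sub_ne_zero.2 (hB x y ▸ h3).symm))).const_smul _)
  rw [hLap.deriv_deriv_add_deriv_deriv, show A x y - B x y = -4 * x by linarith [hAB x y]]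
  have hA1 : 1 - A x y ≠ 0 := sub_ne_zero.2 h2.symm
  have hB1 : 1 - B x y ≠ 0 := sub_ne_zero.2 h3.symm
  field_simp [pi_ne_zero]
  ring
end

section
/- Let μ be a probability measure on ℝ, λ ∈ ℂ with Im λ ≠ 0, and v > 0. Set z₀ = Re λ + (i/v)√(v²(Im λ)² + v). Then ∫ 1/(1 + v|λ − t|²) dμ(t) = −Im G(z₀)/√(v²(Im λ)² + v), where G is the Cauchy transform of μ. -/
/-! Since `(Im z₀)² = (Im λ)² + 1/v` and `Re z₀ = Re λ`, for real `t` we have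
`1 + v|λ - t|² = v|z₀ - t|²`, while `-Im (z₀ - t)⁻¹ = Im z₀ / |z₀ - t|²` with
`Im z₀ = √(v²(Im λ)² + v) / v`. So the integrand equals `-Im (z₀ - t)⁻¹ / √(v²(Im λ)² + v)`,
and the imaginary part commutes with the integral because the Cauchy kernel is bounded. -/

open MeasureTheory

namespace Complex

lemma norm_inv_sub_ofReal_le {z : ℂ} (hz : z.im ≠ 0) (t : ℝ) : ‖(z - t)⁻¹‖ ≤ |z.im|⁻¹ := by
  rw [norm_inv]
  refine inv_anti₀ (abs_pos.mpr hz) ?_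
  simpa using abs_im_le_norm (z - t)

lemma continuous_inv_sub_ofReal {z : ℂ} (hz : z.im ≠ 0) : Continuous fun t : ℝ => (z - t)⁻¹ :=
  (continuous_const.sub continuous_ofReal).inv₀ fun t h => hz <| by
    simpa using congrArg im h

lemma integrable_inv_sub_ofReal {z : ℂ} (hz : z.im ≠ 0) (μ : Measure ℝ) [IsFiniteMeasure μ] :
    Integrable (fun t : ℝ => (z - t)⁻¹) μ :=
  (integrable_const |z.im|⁻¹).mono' (continuous_inv_sub_ofReal hz).aestronglyMeasurable
    (.of_forall (norm_inv_sub_ofReal_le hz))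

lemma im_integral_inv_sub_ofReal {z : ℂ} (hz : z.im ≠ 0) (μ : Measure ℝ) [IsFiniteMeasure μ] :
    (∫ t, (z - t)⁻¹ ∂μ).im = -∫ t, z.im / normSq (z - t) ∂μ := by
  have h : ∫ t, ((z - t)⁻¹).im ∂μ = (∫ t, (z - t)⁻¹ ∂μ).im :=
    integral_im (integrable_inv_sub_ofReal hz μ)
  rw [← h, ← integral_neg]
  simp [inv_im, neg_div]

lemma one_add_mul_norm_sub_ofReal_sq {lam z : ℂ} {v : ℝ} (hre : z.re = lam.re)
    (him : v * z.im ^ 2 = v * lam.im ^ 2 + 1) (t : ℝ) :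
    1 + v * ‖lam - t‖ ^ 2 = v * normSq (z - t) := by
  rw [← normSq_eq_norm_sq, normSq_apply, normSq_apply]
  simp only [sub_re, sub_im, ofReal_re, ofReal_im, sub_zero, hre]
  linear_combination -him

end Complex

theorem f_v_lambda_via_cauchy_general (μ : Measure ℝ) [IsProbabilityMeasure μ]
    (lam : ℂ) (v : ℝ) (hv : 0 < v)
    (z₀ : ℂ) (hz : z₀ = (lam.re : ℂ)
      + (Complex.I / (v : ℂ)) * ((Real.sqrt (v^2 * lam.im^2 + v) : ℝ) : ℂ))
    (G : ℂ → ℂ) (hG : ∀ ζ : ℂ, G ζ = ∫ t, (ζ - (t : ℂ))⁻¹ ∂μ) :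
    ∫ t, 1/(1 + v * ‖lam - (t : ℂ)‖^2) ∂μ
      = -(G z₀).im / Real.sqrt (v^2 * lam.im^2 + v) := by
  set s := Real.sqrt (v^2 * lam.im^2 + v)
  have hs2 : s ^ 2 = v^2 * lam.im^2 + v := Real.sq_sqrt (by positivity)
  have hs : 0 < s := Real.sqrt_pos.mpr (by positivity)
  have hre : z₀.re = lam.re := by simp [hz]
  have him : z₀.im = s / v := by simp [hz, Complex.div_re]; ring
  have hfactor := Complex.one_add_mul_norm_sub_ofReal_sq (lam := lam) (v := v) hre (by
    rw [him]; field_simp; linear_combination hs2)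
  rw [hG, Complex.im_integral_inv_sub_ofReal (by rw [him]; positivity) μ, neg_neg, ← integral_div]
  refine integral_congr_ae (.of_forall fun t => ?_)
  simp only [hfactor, him]
  field_simp

theorem f_v_lambda_via_cauchy (μ : Measure ℝ) [IsProbabilityMeasure μ]
    (lam : ℂ) (him : lam.im ≠ 0) (v : ℝ) (hv : 0 < v)
    (z₀ : ℂ) (hz : z₀ = (lam.re : ℂ)
      + (Complex.I / (v : ℂ)) * ((Real.sqrt (v^2 * lam.im^2 + v) : ℝ) : ℂ))
    (G : ℂ → ℂ) (hG : ∀ ζ : ℂ, G ζ = ∫ t, (ζ - (t : ℂ))⁻¹ ∂μ) :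
    ∫ t, 1/(1 + v * ‖lam - (t : ℂ)‖^2) ∂μ
      = -(G z₀).im / Real.sqrt (v^2 * lam.im^2 + v) :=
  f_v_lambda_via_cauchy_general μ lam v hv z₀ hz G hG
end
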